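/- arXiv:1605.08950 — 2 statements merged into one kernel-verified Lean document; each statement's English description precedes it below -/
import Mathlib

section
/- Let (H,X) be a topological dynamical system and let s ≥ 1. Let H_{s+1} denote the (s+1)-th term of the lower central series of H (H_1 = H, H_{i+1} = [H, H_i]). Then for every h ∈ H_{s+1} and every x ∈ X, the pair (x, h.x) belongs to RP^s_H(X); that is, the configuration ∟^{s+1}(x; h.x) is a dynamical cube in C^{s+1}_H(X). -/
/-!
Common definitions: face elements, Host–Kra cube groups, dynamical cubes, and the
regional proximal relation of order `s`, following Gutman–Manners–Varjú.

We model the discrete cube `{0,1}^ℓ` as `Fin ℓ → Bool`.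
-/

open scoped Classical in
/-- The face element `[g]_F ∈ H^{{0,1}^ℓ}`: equal to `g` on `F` and to the identity
elsewhere. -/
noncomputable def faceEl (H : Type*) [Group H] {ℓ : ℕ} (g : H) (F : Set (Fin ℓ → Bool)) :
    (Fin ℓ → Bool) → H :=
  fun ω => if ω ∈ F then g else 1

/-- A hyperface of the discrete cube `{0,1}^ℓ`: a set of the form `{ω | ω i = a}`. -/
def IsHyperface {ℓ : ℕ} (F : Set (Fin ℓ → Bool)) : Prop :=
  ∃ (i : Fin ℓ) (a : Bool), F = {ω | ω i = a}

/-- The Host–Kra cube group `HK^ℓ(H)`: the subgroup of `H^{{0,1}^ℓ}` generated by the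
face elements `[h]_F` with `F` a hyperface. -/
noncomputable def hostKra (H : Type*) [Group H] (ℓ : ℕ) : Subgroup ((Fin ℓ → Bool) → H) :=
  Subgroup.closure {γ | ∃ (g : H) (F : Set (Fin ℓ → Bool)), IsHyperface F ∧ γ = faceEl H g F}

/-- The set of dynamical cubes `C^ℓ_H(X)`: the closure of the orbit of the constant
configurations under the Host–Kra cube group. -/
noncomputable def dynCubes (H : Type*) (X : Type*) [Group H] [TopologicalSpace X]
    [MulAction H X] (ℓ : ℕ) : Set ((Fin ℓ → Bool) → X) :=
  closure {c | ∃ γ ∈ hostKra H ℓ, ∃ x : X, c = fun ω => γ ω • x}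

/-- The corner configuration `∟^ℓ(x;y)`: the configuration whose vertex at `(1,…,1)` is `y`
and all of whose other vertices are `x`. -/
noncomputable def corner {X : Type*} (ℓ : ℕ) (x y : X) : (Fin ℓ → Bool) → X :=
  fun ω => if ω = (fun _ => true) then y else x

/-- The regional proximal relation of order `s`:
`RP^s_H(X) = {(x,y) | ∟^{s+1}(x;y) ∈ C^{s+1}_H(X)}`. -/
noncomputable def RP (H : Type*) (X : Type*) [Group H] [TopologicalSpace X] [MulAction H X]
    (s : ℕ) : Set (X × X) :=
  {p | corner (s + 1) p.1 p.2 ∈ dynCubes H X (s + 1)}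

/-!
The commutator of the face elements `[a]_{F₁}` and `[b]_{F₂}` is `[⁅a, b⁆]_{F₁ ∩ F₂}`. Since
`H_{n+2}` is generated by commutators of elements of `H_{n+1}` with elements of `H`, induction on
`n` shows that `[g]_F ∈ HK^ℓ(H)` whenever `F` is an intersection of `n + 1` coordinate hyperfaces
`{ω | ω i = 1}` and `g ∈ H_{n+1}`. For `ℓ = s + 1` and all coordinates, `F` is the single vertex
`(1,…,1)`, and `[h]_F` applied to the constant configuration `x` is `∟^{s+1}(x; h • x)`.
-/

open scoped commutatorElement

lemma faceEl_commutator (H : Type*) [Group H] {ℓ : ℕ} (a b : H) (F₁ F₂ : Set (Fin ℓ → Bool)) :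
    faceEl H ⁅a, b⁆ (F₁ ∩ F₂) = ⁅faceEl H a F₁, faceEl H b F₂⁆ := by
  funext ω
  by_cases h₁ : ω ∈ F₁ <;> by_cases h₂ : ω ∈ F₂ <;>
    simp [faceEl, commutatorElement_def, h₁, h₂]

noncomputable def faceHom (H : Type*) [Group H] {ℓ : ℕ} (F : Set (Fin ℓ → Bool)) :
    H →* (Fin ℓ → Bool) → H where
  toFun g := faceEl H g F
  map_one' := by funext ω; simp [faceEl]
  map_mul' a b := by funext ω; by_cases hω : ω ∈ F <;> simp [faceEl, hω]

lemma faceEl_mem_hostKra_of_isHyperface (H : Type*) [Group H] {ℓ : ℕ} (g : H)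
    {F : Set (Fin ℓ → Bool)} (hF : IsHyperface F) : faceEl H g F ∈ hostKra H ℓ :=
  Subgroup.subset_closure ⟨g, F, hF, rfl⟩

lemma Subgroup.commutatorElement_mem {G : Type*} [Group G] (K : Subgroup G) {a b : G}
    (ha : a ∈ K) (hb : b ∈ K) : ⁅a, b⁆ ∈ K := by
  rw [commutatorElement_def]
  exact mul_mem (mul_mem (mul_mem ha hb) (inv_mem ha)) (inv_mem hb)

lemma lowerCentralSeries_succ_le_comap_faceHom_inter (H : Type*) [Group H] {ℓ n : ℕ}
    {F₁ F₂ : Set (Fin ℓ → Bool)}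
    (h₁ : (⊤ : Subgroup H).lowerCentralSeries n ≤ (hostKra H ℓ).comap (faceHom H F₁))
    (h₂ : IsHyperface F₂) :
    (⊤ : Subgroup H).lowerCentralSeries (n + 1) ≤ (hostKra H ℓ).comap (faceHom H (F₁ ∩ F₂)) := by
  rw [Subgroup.lowerCentralSeries_succ, Subgroup.commutator_le]
  intro a ha b _
  change faceEl H ⁅a, b⁆ (F₁ ∩ F₂) ∈ hostKra H ℓ
  rw [faceEl_commutator]
  exact Subgroup.commutatorElement_mem _ (h₁ ha) (faceEl_mem_hostKra_of_isHyperface H b h₂)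

def onesFace {ℓ : ℕ} (S : Finset (Fin ℓ)) : Set (Fin ℓ → Bool) :=
  {ω | ∀ i ∈ S, ω i = true}

lemma onesFace_singleton {ℓ : ℕ} (i : Fin ℓ) : onesFace {i} = {ω | ω i = true} := by
  simp [onesFace]

lemma onesFace_eq_inter_erase {ℓ : ℕ} {S : Finset (Fin ℓ)} {i : Fin ℓ} (hi : i ∈ S) :
    onesFace S = onesFace (S.erase i) ∩ {ω | ω i = true} := by
  ext ω
  simp only [onesFace, Set.mem_ofPred_eq, Set.mem_inter_iff, Finset.mem_erase]
  exact ⟨fun h => ⟨fun j hj => h j hj.2, h i hi⟩,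
    fun ⟨h, hωi⟩ j hj => if hji : j = i then hji ▸ hωi else h j ⟨hji, hj⟩⟩

lemma onesFace_univ (ℓ : ℕ) : onesFace (Finset.univ : Finset (Fin ℓ)) = {fun _ => true} := by
  ext ω
  simp [onesFace, funext_iff]

lemma lowerCentralSeries_le_comap_faceHom_onesFace (H : Type*) [Group H] {ℓ : ℕ} (n : ℕ)
    {S : Finset (Fin ℓ)} (hS : S.card = n + 1) :
    (⊤ : Subgroup H).lowerCentralSeries n ≤ (hostKra H ℓ).comap (faceHom H (onesFace S)) := by
  induction n generalizing S with
  | zero =>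
    obtain ⟨i, rfl⟩ := Finset.card_eq_one.mp hS
    intro g _
    rw [onesFace_singleton]
    exact faceEl_mem_hostKra_of_isHyperface H g ⟨i, true, rfl⟩
  | succ n ih =>
    obtain ⟨i, hi⟩ := Finset.card_pos.mp (by omega : 0 < S.card)
    rw [onesFace_eq_inter_erase hi]
    exact lowerCentralSeries_succ_le_comap_faceHom_inter H
      (ih (by rw [Finset.card_erase_of_mem hi, hS]; rfl)) ⟨i, true, rfl⟩

lemma faceEl_smul_eq_corner {H X : Type*} [Group H] [MulAction H X] (ℓ : ℕ) (h : H) (x : X) :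
    (fun ω => faceEl H h {fun _ => true} ω • x) = corner ℓ x (h • x) := by
  funext ω
  by_cases hω : ω = fun _ => true <;> simp [faceEl, corner, hω]

/-- In Mathlib's indexing the paper's `H_{s+1}` is `lowerCentralSeries s`. -/
theorem statement5_general {H X : Type*} [Group H]
    [MetricSpace X] [MulAction H X]
    (s : ℕ) (h : H) (hh : h ∈ (⊤ : Subgroup H).lowerCentralSeries s) (x : X) :
    (x, h • x) ∈ RP H X s := by
  have hmem : faceEl H h {fun _ => true} ∈ hostKra H (s + 1) := by
    rw [← onesFace_univ]
    exact lowerCentralSeries_le_comap_faceHom_onesFace H s (by simp) hh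
  exact subset_closure ⟨_, hmem, x, (faceEl_smul_eq_corner (s + 1) h x).symm⟩

/-- If `h` lies in the `(s+1)`-th term of the lower central series of `H`
(with `H₁ = H`, `H_{i+1} = [H, H_i]`; in Mathlib's indexing `H_{s+1} = lowerCentralSeries H s`),
then `(x, h • x) ∈ RP^s_H(X)` for every `x`. -/
theorem statement5 {H X : Type*} [Group H] [TopologicalSpace H] [IsTopologicalGroup H]
    [TopologicalSpace.MetrizableSpace H]
    [MetricSpace X] [CompactSpace X] [MulAction H X] [ContinuousSMul H X]
    (s : ℕ) (hs : 1 ≤ s) (h : H) (hh : h ∈ (⊤ : Subgroup H).lowerCentralSeries s) (x : X) :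
    (x, h • x) ∈ RP H X s :=
  statement5_general s h hh x
end

section
/- Let (H,X) be a minimal topological dynamical system with H perfect, i.e. H = [H,H]. Then for every s ≥ 1 the regional proximal relation of order s is everything: RP^s_H(X) = X × X; equivalently, ∟^{s+1}(x;y) ∈ C^{s+1}_H(X) for all x, y ∈ X. -/
/-!
The commutator of the face elements `[g]_F` and `[h]_F'` is `[⁅g, h⁆]_{F ∩ F'}`. Since `H` is
perfect, the `h` with `[h]_F ∈ HK^ℓ(H)` therefore form all of `H` for every intersection of
hyperfaces, in particular for the top vertex `{(1,…,1)}`. So `∟(x; h • x) = [h]_{(1,…,1)} • x̂`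
is a cube for every `h`, and as the orbit of `x` is dense and the cubes are closed, so is
every `∟(x; y)`.
-/

open scoped commutatorElement

section FaceSubgroup

variable {H : Type*} [Group H] {ℓ : ℕ}

lemma faceEl_mul (a b : H) (F : Set (Fin ℓ → Bool)) :
    faceEl H (a * b) F = faceEl H a F * faceEl H b F := by
  ext ω; by_cases h : ω ∈ F <;> simp [faceEl, h]

lemma faceEl_one (F : Set (Fin ℓ → Bool)) : faceEl H (1 : H) F = 1 := by
  ext ω; simp [faceEl]

lemma faceEl_inv (a : H) (F : Set (Fin ℓ → Bool)) :
    faceEl H a⁻¹ F = (faceEl H a F)⁻¹ := by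
  ext ω; by_cases h : ω ∈ F <;> simp [faceEl, h]

lemma faceEl_commutatorElement (g h : H) (F F' : Set (Fin ℓ → Bool)) :
    faceEl H ⁅g, h⁆ (F ∩ F') = ⁅faceEl H g F, faceEl H h F'⁆ := by
  ext ω
  simp only [commutatorElement_def, Pi.mul_apply, Pi.inv_apply, faceEl]
  by_cases h1 : ω ∈ F <;> by_cases h2 : ω ∈ F' <;> simp [h1, h2]

variable (H ℓ) in
noncomputable def faceSubgroup (F : Set (Fin ℓ → Bool)) : Subgroup H where
  carrier := {h | faceEl H h F ∈ hostKra H ℓ}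
  mul_mem' {a b} ha hb := by
    change faceEl H (a * b) F ∈ hostKra H ℓ
    exact faceEl_mul a b F ▸ mul_mem ha hb
  one_mem' := by
    change faceEl H 1 F ∈ hostKra H ℓ
    exact faceEl_one (H := H) F ▸ one_mem _
  inv_mem' {a} ha := by
    change faceEl H a⁻¹ F ∈ hostKra H ℓ
    exact faceEl_inv a F ▸ inv_mem ha

lemma mem_faceSubgroup {h : H} {F : Set (Fin ℓ → Bool)} :
    h ∈ faceSubgroup H ℓ F ↔ faceEl H h F ∈ hostKra H ℓ := Iff.rfl

lemma faceSubgroup_eq_top_of_isHyperface {F : Set (Fin ℓ → Bool)} (hF : IsHyperface F) :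
    faceSubgroup H ℓ F = ⊤ :=
  eq_top_iff.mpr fun h _ => Subgroup.subset_closure ⟨h, F, hF, rfl⟩

lemma commutator_faceSubgroup_le (F F' : Set (Fin ℓ → Bool)) :
    ⁅faceSubgroup H ℓ F, faceSubgroup H ℓ F'⁆ ≤ faceSubgroup H ℓ (F ∩ F') := by
  rw [Subgroup.commutator_le]
  intro g hg h hh
  rw [mem_faceSubgroup, faceEl_commutatorElement, commutatorElement_def]
  exact mul_mem (mul_mem (mul_mem hg hh) (inv_mem hg)) (inv_mem hh)

lemma faceSubgroup_inter_eq_top (hperf : commutator H = ⊤) {F F' : Set (Fin ℓ → Bool)}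
    (hF : faceSubgroup H ℓ F = ⊤) (hF' : faceSubgroup H ℓ F' = ⊤) :
    faceSubgroup H ℓ (F ∩ F') = ⊤ :=
  top_unique <| calc
    ⊤ = ⁅faceSubgroup H ℓ F, faceSubgroup H ℓ F'⁆ := by rw [hF, hF', ← commutator_def, hperf]
    _ ≤ faceSubgroup H ℓ (F ∩ F') := commutator_faceSubgroup_le F F'

lemma faceSubgroup_biInter_eq_top (hperf : commutator H = ⊤) {ι : Type*} {s : Finset ι}
    (hs : s.Nonempty) {F : ι → Set (Fin ℓ → Bool)} (hF : ∀ i ∈ s, faceSubgroup H ℓ (F i) = ⊤) :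
    faceSubgroup H ℓ (⋂ i ∈ s, F i) = ⊤ := by
  classical
  induction hs using Finset.Nonempty.cons_induction with
  | singleton i => simpa using hF i (Finset.mem_singleton_self i)
  | cons i s hi hs ih =>
    rw [Finset.cons_eq_insert, Finset.set_biInter_insert]
    exact faceSubgroup_inter_eq_top hperf (hF i (Finset.mem_cons_self i s))
      (ih fun j hj => hF j (Finset.mem_cons_of_mem hj))

lemma faceSubgroup_top_vertex_eq_top (hperf : commutator H = ⊤) (n : ℕ) :
    faceSubgroup H (n + 1) {fun _ => true} = ⊤ := by
  have hvertex : ({fun _ => true} : Set (Fin (n + 1) → Bool)) =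
      ⋂ i ∈ (Finset.univ : Finset (Fin (n + 1))), {ω | ω i = true} := by
    ext ω
    simp [funext_iff]
  rw [hvertex]
  exact faceSubgroup_biInter_eq_top hperf Finset.univ_nonempty
    fun i _ => faceSubgroup_eq_top_of_isHyperface ⟨i, true, rfl⟩

end FaceSubgroup

section Corner

variable {X : Type*}

lemma continuous_corner [TopologicalSpace X] (ℓ : ℕ) (x : X) : Continuous (corner ℓ x) :=
  continuous_pi fun ω => by
    unfold corner
    split_ifs <;> fun_prop

lemma corner_smul_eq_faceEl_smul {H : Type*} [Group H] [MulAction H X] (ℓ : ℕ) (x : X) (h : H) :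
    corner ℓ x (h • x) = fun ω => faceEl H h {fun _ => true} ω • x := by
  funext ω
  by_cases hω : ω = fun _ => true <;> simp [corner, faceEl, hω]

end Corner

theorem statement6_general {H X : Type*} [Group H]
    [MetricSpace X] [MulAction H X]
    (hmin : ∀ x : X, Dense (MulAction.orbit H x))
    (hperf : commutator H = ⊤)
    (s : ℕ) :
    RP H X s = Set.univ := by
  refine Set.eq_univ_of_forall fun ⟨x, y⟩ => ?_
  have horbit : Set.MapsTo (corner (s + 1) x) (MulAction.orbit H x)
      {c | ∃ γ ∈ hostKra H (s + 1), ∃ x₀ : X, c = fun ω => γ ω • x₀} := by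
    rintro _ ⟨h, rfl⟩
    have hh : h ∈ faceSubgroup H (s + 1) {fun _ => true} :=
      faceSubgroup_top_vertex_eq_top hperf s ▸ Subgroup.mem_top h
    exact ⟨_, hh, x, corner_smul_eq_faceEl_smul (s + 1) x h⟩
  exact map_mem_closure (continuous_corner (s + 1) x) (hmin x y) horbit

/-- If `(H, X)` is minimal and `H` is perfect (`H = [H,H]`), then the regional
proximal relation of every order `s ≥ 1` is everything. -/
theorem statement6 {H X : Type*} [Group H] [TopologicalSpace H] [IsTopologicalGroup H]
    [TopologicalSpace.MetrizableSpace H]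
    [MetricSpace X] [CompactSpace X] [MulAction H X] [ContinuousSMul H X]
    (hmin : ∀ x : X, Dense (MulAction.orbit H x))
    (hperf : commutator H = ⊤)
    (s : ℕ) (hs : 1 ≤ s) :
    RP H X s = Set.univ :=
  statement6_general hmin hperf s
end
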